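/- arXiv:math/0206205 — 6 statements merged into one kernel-verified Lean document; each statement's English description precedes it below -/
import Mathlib

section
/- In the dual Yang-Mills algebra, the element g = g_{αβ} θ^α θ^β of degree 2 is central: for every generator θ^ν one has g·θ^ν = θ^ν·g. -/
/-!
Expanding `G θⁿ = h_{ab} θ^a θ^b θ^n` and `θⁿ G = h_{ab} θ^n θ^a θ^b` by the cubic relation turns
each into `c • (contraction) * G`. As `h = g⁻¹` with `g` symmetric, `h_{ab} g_{ab} = d` (the
dimension) and `h_{ab} g_{bn} = δ_{an}`, so both contractions equal `(d + 1 - 2) • θⁿ`: the two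
products are the same element.
-/

open Finset

section Contraction

variable {K ι M : Type*} [CommRing K] [Fintype ι] [DecidableEq ι] [AddCommGroup M] [Module K M]
  {g h : Matrix ι ι K}

theorem Matrix.sum_sum_mul_smul_of_mul_eq_one (hhg : h * g = 1) (v : ι → M) (n : ι) :
    ∑ a, ∑ b, (h a b * g b n) • v a = v n := by
  simp_rw [← sum_smul, ← Matrix.mul_apply, hhg, Matrix.one_apply, ite_smul, one_smul, zero_smul,
    sum_ite_eq', mem_univ, if_true]

theorem Matrix.sum_sum_mul_smul_of_mul_eq_one' (hgh : g * h = 1) (v : ι → M) (n : ι) :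
    ∑ a, ∑ b, (g n a * h a b) • v b = v n := by
  rw [sum_comm]
  simp_rw [← sum_smul, ← Matrix.mul_apply, hgh,
    Matrix.one_apply, ite_smul, one_smul, zero_smul, sum_ite_eq, mem_univ, if_true]

theorem Matrix.sum_sum_mul_eq_card (hg : g.IsSymm) (hhg : h * g = 1) :
    ∑ a, ∑ b, h a b * g a b = Fintype.card ι := by
  calc ∑ a, ∑ b, h a b * g a b = (h * g).trace := by simp only [Matrix.trace, Matrix.diag,
        Matrix.mul_apply, hg.apply]
    _ = Fintype.card ι := by rw [hhg, Matrix.trace_one]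

theorem Matrix.sum_sum_smul_contract_left (hg : g.IsSymm) (hhg : h * g = 1) (v : ι → M) (n : ι) :
    ∑ a, ∑ b, h a b • (g a b • v n + g b n • v a - (2 * g a n) • v b) =
      ((Fintype.card ι : K) - 1) • v n := by
  have hgh : g * h = 1 := mul_eq_one_comm.mp hhg
  have h2 : ∀ a b, h a b * (2 * g a n) = 2 * (g n a * h a b) := fun a b => by
    rw [hg.apply]; ring
  simp only [smul_add, smul_sub, smul_smul, sum_add_distrib, sum_sub_distrib, h2]
  rw [sum_sum_mul_smul_of_mul_eq_one hhg]
  simp only [mul_smul (2 : K), ← smul_sum]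
  rw [sum_sum_mul_smul_of_mul_eq_one' hgh]
  simp only [← sum_smul]
  rw [sum_sum_mul_eq_card hg hhg]
  module

theorem Matrix.sum_sum_smul_contract_right (hg : g.IsSymm) (hhg : h * g = 1) (v : ι → M)
    (n : ι) :
    ∑ a, ∑ b, h a b • (g n a • v b + g a b • v n - (2 * g n b) • v a) =
      ((Fintype.card ι : K) - 1) • v n := by
  have hgh : g * h = 1 := mul_eq_one_comm.mp hhg
  have h1 : ∀ a b, h a b * g n a = g n a * h a b := fun a b => mul_comm _ _
  have h2 : ∀ a b, h a b * (2 * g n b) = 2 * (h a b * g b n) := fun a b => by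
    rw [hg.apply]; ring
  simp only [smul_add, smul_sub, smul_smul, sum_add_distrib, sum_sub_distrib, h1, h2]
  rw [sum_sum_mul_smul_of_mul_eq_one' hgh]
  simp only [mul_smul (2 : K), ← smul_sum]
  rw [sum_sum_mul_smul_of_mul_eq_one hhg]
  simp only [← sum_smul]
  rw [sum_sum_mul_eq_card hg hhg]
  module

theorem commute_of_cubic_relation {B : Type*} [Ring B] [Algebra K B] (hg : g.IsSymm)
    (hhg : h * g = 1) (θ : ι → B) (c : K) {G : B} (hG : G = ∑ a, ∑ b, h a b • (θ a * θ b))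
    (hrel : ∀ l m n, θ l * θ m * θ n = c • (g l m • θ n + g m n • θ l - (2 * g l n) • θ m) * G)
    (n : ι) : Commute G (θ n) := by
  have pull : ∀ X : ι → ι → B,
      ∑ a, ∑ b, h a b • (c • X a b * G) = c • (∑ a, ∑ b, h a b • X a b) * G := by
    intro X
    simp only [smul_sum, sum_mul, smul_mul_assoc, smul_comm c]
  calc G * θ n = ∑ a, ∑ b, h a b • (θ a * θ b * θ n) := by
        simp only [hG, sum_mul, smul_mul_assoc]
    _ = c • (((Fintype.card ι : K) - 1) • θ n) * G := by
        simp only [hrel, pull, Matrix.sum_sum_smul_contract_left hg hhg]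
    _ = ∑ a, ∑ b, h a b • (θ n * θ a * θ b) := by
        simp only [hrel, pull, Matrix.sum_sum_smul_contract_right hg hhg]
    _ = θ n * G := by
        simp only [hG, mul_sum, mul_smul_comm, mul_assoc]

end Contraction

theorem dual_yang_mills_g_central_general (s : ℕ)
    (g ginv : Matrix (Fin (s + 1)) (Fin (s + 1)) ℝ)
    (hsymm : g.IsSymm) (hinv' : ginv * g = 1)
    (B : Type*) [Ring B] [Algebra ℂ B] (θ : Fin (s + 1) → B)
    (G : B) (hG : G = ∑ a, ∑ b, ((ginv a b : ℂ)) • (θ a * θ b))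
    (hrel : ∀ l m n, θ l * θ m * θ n =
      ((1 : ℂ) / s) • (((g l m : ℂ)) • θ n + ((g m n : ℂ)) • θ l
        - (2 * (g l n : ℂ)) • θ m) * G) :
    ∀ n, G * θ n = θ n * G := by
  have hinvℂ : ginv.map Complex.ofRealHom * g.map Complex.ofRealHom = 1 := by
    rw [← Matrix.map_mul, hinv', Matrix.map_one _ (map_zero _) (map_one _)]
  exact fun n => (commute_of_cubic_relation (hsymm.map _) hinvℂ θ _ hG hrel n).eq

/-- In the dual Yang-Mills algebra, the element
`g = g_{αβ} θ^α θ^β` of degree 2 is central: `g·θ^ν = θ^ν·g` for every generator.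
Formulated universally: in any unital associative ℂ-algebra with elements
`θ^0,…,θ^s` satisfying the defining relations of `A^!` (for an invertible
real symmetric matrix `g^{μν}` with inverse `g_{μν}`), the element `G` commutes
with every generator. -/
theorem dual_yang_mills_g_central (s : ℕ) (hs : 1 ≤ s)
    (g ginv : Matrix (Fin (s + 1)) (Fin (s + 1)) ℝ)
    (hsymm : g.IsSymm) (hinv : g * ginv = 1) (hinv' : ginv * g = 1)
    (B : Type*) [Ring B] [Algebra ℂ B] (θ : Fin (s + 1) → B)
    (G : B) (hG : G = ∑ a, ∑ b, ((ginv a b : ℂ)) • (θ a * θ b))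
    (hrel : ∀ l m n, θ l * θ m * θ n =
      ((1 : ℂ) / s) • (((g l m : ℂ)) • θ n + ((g m n : ℂ)) • θ l
        - (2 * (g l n : ℂ)) • θ m) * G) :
    ∀ n, G * θ n = θ n * G :=
  dual_yang_mills_g_central_general s g ginv hsymm hinv' B θ G hG hrel
end

section
/- In the Yang-Mills algebra A, the defining relations are equivalent to the matrix identity M∇ = 0, where ∇ is the column vector of generators and M is the (s+1)×(s+1) matrix with entries M^{μν} = (g^{μν} g^{αβ} + g^{μα} g^{νβ} − 2 g^{μβ} g^{να}) ∇_α ∇_β; moreover the transposed identity ∇^t M = 0 also holds in A. -/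
/-!
Raise indices with `g`: `∇^μ = g^{μa} ∇_a` and `Δ = g^{ab} ∇_a ∇_b`. Then
`M^{μν} = g^{μν} Δ + ∇^μ ∇^ν - 2 ∇^ν ∇^μ`, while the `ν`-th relation reads
`R_ν = Δ ∇_ν + ∇_ν Δ - 2 ∇_l ∇_ν ∇^l`. Using only the symmetry of `g`, both `(M∇)^μ` and
`(∇ᵗM)^μ` expand to `Δ ∇^μ + ∇^μ Δ - 2 ∇_l ∇^μ ∇^l = g^{μc} R_c`. So the relations imply both
identities, and conversely `M∇ = 0` gives `g R = 0`, hence `R = 0` as `g` is invertible.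
-/

open Finset

namespace YangMills

variable {n K B : Type*} [Fintype n] [CommRing K] [Ring B] [Algebra K B]

def raiseIndex (g : Matrix n n K) (f : n → B) (μ : n) : B := ∑ a, g μ a • f a

def laplacian (g : Matrix n n K) (f : n → B) : B := ∑ a, f a * raiseIndex g f a

def relation (g : Matrix n n K) (f : n → B) (ν : n) : B := ∑ l, ∑ m, g l m • ⁅f l, ⁅f m, f ν⁆⁆

def matrix (g : Matrix n n K) (f : n → B) : Matrix n n B := fun μ ν =>
  ∑ a, ∑ b, (g μ ν * g a b + g μ a * g ν b - 2 * g μ b * g ν a) • (f a * f b)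

theorem sum_raiseIndex_mul_mul {g : Matrix n n K} (hg : g.IsSymm) (u v : n → B) (x : B) :
    ∑ a, raiseIndex g u a * x * v a = ∑ a, u a * x * raiseIndex g v a := by
  simp only [raiseIndex, sum_mul, mul_sum, smul_mul_assoc, mul_smul_comm]
  rw [sum_comm]
  exact sum_congr rfl fun a _ => sum_congr rfl fun b _ => by rw [hg.apply a b]

theorem sum_smul_mul_raiseIndex (g : Matrix n n K) (f : n → B) (μ ν : n) :
    ∑ a, ∑ b, (g μ a * g ν b) • (f a * f b) = raiseIndex g f μ * raiseIndex g f ν := by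
  simp only [raiseIndex, sum_mul_sum, smul_mul_smul_comm]

theorem matrix_apply (g : Matrix n n K) (f : n → B) (μ ν : n) :
    matrix g f μ ν = g μ ν • laplacian g f + raiseIndex g f μ * raiseIndex g f ν
      - 2 • (raiseIndex g f ν * raiseIndex g f μ) := by
  have trace_part : ∑ a, ∑ b, (g μ ν * g a b) • (f a * f b) = g μ ν • laplacian g f := by
    simp only [laplacian, raiseIndex, smul_sum, mul_sum, mul_smul_comm, smul_smul]
  have swapped_part : ∑ a, ∑ b, (2 * g μ b * g ν a) • (f a * f b)
      = 2 • (raiseIndex g f ν * raiseIndex g f μ) := by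
    rw [← sum_smul_mul_raiseIndex]
    simp only [smul_sum, mul_assoc, mul_smul, ofNat_smul_eq_nsmul, mul_comm (g μ _)]
  simp only [matrix, add_smul, sub_smul, sum_add_distrib, sum_sub_distrib, trace_part,
    sum_smul_mul_raiseIndex, swapped_part]

theorem sum_raiseIndex_mul {g : Matrix n n K} (hg : g.IsSymm) (f : n → B) :
    ∑ a, raiseIndex g f a * f a = laplacian g f := by
  rw [laplacian]
  simpa only [mul_one] using sum_raiseIndex_mul_mul hg f f 1

theorem relation_apply {g : Matrix n n K} (hg : g.IsSymm) (f : n → B) (ν : n) :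
    relation g f ν = laplacian g f * f ν + f ν * laplacian g f
      - 2 • ∑ l, f l * f ν * raiseIndex g f l := by
  have raise_inner : ∀ l, ∑ m, g l m • ⁅f l, ⁅f m, f ν⁆⁆ = ⁅f l, ⁅raiseIndex g f l, f ν⁆⁆ := by
    intro l
    simp only [raiseIndex, Ring.lie_def, sum_mul, mul_sum, smul_mul_assoc, mul_smul_comm, smul_sub,
      sum_sub_distrib, mul_sub, sub_mul]
  have expand : ∀ l, ⁅f l, ⁅raiseIndex g f l, f ν⁆⁆ = f l * raiseIndex g f l * f ν
      - f l * f ν * raiseIndex g f l - raiseIndex g f l * f ν * f l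
      + f ν * (raiseIndex g f l * f l) := by
    intro l
    simp only [Ring.lie_def]
    noncomm_ring
  rw [relation, sum_congr rfl fun l _ => raise_inner l]
  simp only [expand, sum_add_distrib, sum_sub_distrib, ← sum_mul, ← mul_sum,
    sum_raiseIndex_mul_mul hg, sum_raiseIndex_mul hg]
  rw [laplacian]
  abel

theorem sum_smul_relation {g : Matrix n n K} (hg : g.IsSymm) (f : n → B) (μ : n) :
    ∑ c, g μ c • relation g f c = laplacian g f * raiseIndex g f μ
      + raiseIndex g f μ * laplacian g f - 2 • ∑ l, f l * raiseIndex g f μ * raiseIndex g f l := by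
  have left : ∑ c, g μ c • (laplacian g f * f c) = laplacian g f * raiseIndex g f μ := by
    simp only [raiseIndex, mul_sum, mul_smul_comm]
  have right : ∑ c, g μ c • (f c * laplacian g f) = raiseIndex g f μ * laplacian g f := by
    simp only [raiseIndex, sum_mul, smul_mul_assoc]
  have middle : ∑ c, g μ c • ∑ l, f l * f c * raiseIndex g f l
      = ∑ l, f l * raiseIndex g f μ * raiseIndex g f l := by
    rw [raiseIndex]
    simp only [smul_sum, mul_sum, sum_mul, mul_smul_comm, smul_mul_assoc]
    exact sum_comm
  simp only [relation_apply hg, smul_sub, smul_add, sum_add_distrib, sum_sub_distrib, left, right,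
    smul_comm (g μ _) (2 : ℕ), ← smul_sum, middle]

theorem sum_matrix_mul {g : Matrix n n K} (hg : g.IsSymm) (f : n → B) (μ : n) :
    ∑ ν, matrix g f μ ν * f ν = ∑ c, g μ c • relation g f c := by
  have trace_part : ∑ ν, g μ ν • laplacian g f * f ν = laplacian g f * raiseIndex g f μ := by
    simp only [raiseIndex, mul_sum, smul_mul_assoc, mul_smul_comm]
  have contracted : ∑ ν, raiseIndex g f μ * raiseIndex g f ν * f ν
      = raiseIndex g f μ * laplacian g f := by
    simp only [mul_assoc, ← mul_sum, sum_raiseIndex_mul hg]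
  have swapped : ∑ ν, 2 • (raiseIndex g f ν * raiseIndex g f μ) * f ν
      = 2 • ∑ l, f l * raiseIndex g f μ * raiseIndex g f l := by
    simp only [smul_mul_assoc, ← smul_sum, sum_raiseIndex_mul_mul hg]
  simp only [matrix_apply, add_mul, sub_mul, sum_add_distrib, sum_sub_distrib]
  rw [trace_part, contracted, swapped, sum_smul_relation hg]

theorem sum_mul_matrix {g : Matrix n n K} (hg : g.IsSymm) (f : n → B) (ν : n) :
    ∑ μ, f μ * matrix g f μ ν = ∑ c, g ν c • relation g f c := by
  have trace_part : ∑ μ, f μ * g μ ν • laplacian g f = raiseIndex g f ν * laplacian g f := by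
    simp only [raiseIndex, sum_mul, mul_smul_comm, smul_mul_assoc, hg.apply]
  have contracted : ∑ μ, f μ * (raiseIndex g f μ * raiseIndex g f ν)
      = laplacian g f * raiseIndex g f ν := by
    simp only [laplacian, ← mul_assoc, sum_mul]
  have swapped : ∑ μ, f μ * 2 • (raiseIndex g f ν * raiseIndex g f μ)
      = 2 • ∑ l, f l * raiseIndex g f ν * raiseIndex g f l := by
    simp only [mul_smul_comm, ← smul_sum, mul_assoc]
  simp only [matrix_apply, mul_add, mul_sub, sum_add_distrib, sum_sub_distrib]
  rw [trace_part, contracted, swapped, sum_smul_relation hg, add_comm (raiseIndex g f ν * _)]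

end YangMills

theorem Matrix.eq_zero_of_forall_sum_smul_eq_zero {n K V : Type*} [Fintype n] [DecidableEq n]
    [CommRing K] [AddCommGroup V] [Module K V] {G : Matrix n n K} (hG : IsUnit G.det)
    {v : n → V} (h : ∀ i, ∑ j, G i j • v j = 0) : v = 0 := by
  funext k
  calc v k = ∑ j, (G⁻¹ * G) k j • v j := by
        simp [Matrix.nonsing_inv_mul G hG, Matrix.one_apply, ite_smul]
    _ = ∑ i, G⁻¹ k i • ∑ j, G i j • v j := by
        simp only [Matrix.mul_apply, sum_smul, smul_sum, smul_smul]
        exact sum_comm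
    _ = 0 := by simp [h]

open YangMills

theorem yang_mills_matrix_relations_general (s : ℕ)
    (g : Matrix (Fin (s + 1)) (Fin (s + 1)) ℝ)
    (hsymm : g.IsSymm) (hdet : IsUnit g.det)
    (B : Type*) [Ring B] [Algebra ℂ B] (nabla : Fin (s + 1) → B)
    (M : Matrix (Fin (s + 1)) (Fin (s + 1)) B)
    (hM : ∀ μ ν, M μ ν = ∑ a, ∑ b,
      (((g μ ν * g a b + g μ a * g ν b - 2 * g μ b * g ν a : ℝ) : ℂ)) •
        (nabla a * nabla b)) :
    ((∀ ν, ∑ l, ∑ m, ((g l m : ℂ)) •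
        (nabla l * (nabla m * nabla ν - nabla ν * nabla m)
          - (nabla m * nabla ν - nabla ν * nabla m) * nabla l) = 0) ↔
      (∀ μ, ∑ ν, M μ ν * nabla ν = 0)) ∧
    ((∀ ν, ∑ l, ∑ m, ((g l m : ℂ)) •
        (nabla l * (nabla m * nabla ν - nabla ν * nabla m)
          - (nabla m * nabla ν - nabla ν * nabla m) * nabla l) = 0) →
      (∀ ν, ∑ μ, nabla μ * M μ ν = 0)) := by
  set G : Matrix (Fin (s + 1)) (Fin (s + 1)) ℂ := g.map (↑)
  have hG : G.IsSymm := hsymm.map _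
  have hGdet : IsUnit G.det := Complex.ofRealHom.map_det g ▸ hdet.map Complex.ofRealHom
  obtain rfl : M = matrix G nabla := by
    ext μ ν
    rw [hM]
    push_cast
    rfl
  -- `⁅x, y⁆` unfolds to `x * y - y * x` and `G l m` to `↑(g l m)`
  change ((∀ ν, relation G nabla ν = 0) ↔ ∀ μ, ∑ ν, matrix G nabla μ ν * nabla ν = 0) ∧
    ((∀ ν, relation G nabla ν = 0) → ∀ ν, ∑ μ, nabla μ * matrix G nabla μ ν = 0)
  simp only [sum_matrix_mul hG, sum_mul_matrix hG]
  exact ⟨⟨fun h μ => by simp [h],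
    fun h => congrFun (Matrix.eq_zero_of_forall_sum_smul_eq_zero hGdet h)⟩, fun h ν => by simp [h]⟩

/-- the defining relations of the Yang-Mills algebra,
`g^{λμ}[∇_λ,[∇_μ,∇_ν]] = 0` for all `ν`, are equivalent to the matrix
identity `M∇ = 0` where
`M^{μν} = (g^{μν} g^{αβ} + g^{μα} g^{νβ} − 2 g^{μβ} g^{να}) ∇_α ∇_β`;
moreover the relations also imply the transposed identity `∇ᵗM = 0`.
(Formulated universally over any unital associative ℂ-algebra; in particular
both identities hold in the Yang-Mills algebra `A` itself.) -/
theorem yang_mills_matrix_relations (s : ℕ) (hs : 1 ≤ s)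
    (g : Matrix (Fin (s + 1)) (Fin (s + 1)) ℝ)
    (hsymm : g.IsSymm) (hdet : IsUnit g.det)
    (B : Type*) [Ring B] [Algebra ℂ B] (nabla : Fin (s + 1) → B)
    (M : Matrix (Fin (s + 1)) (Fin (s + 1)) B)
    (hM : ∀ μ ν, M μ ν = ∑ a, ∑ b,
      (((g μ ν * g a b + g μ a * g ν b - 2 * g μ b * g ν a : ℝ) : ℂ)) •
        (nabla a * nabla b)) :
    ((∀ ν, ∑ l, ∑ m, ((g l m : ℂ)) •
        (nabla l * (nabla m * nabla ν - nabla ν * nabla m)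
          - (nabla m * nabla ν - nabla ν * nabla m) * nabla l) = 0) ↔
      (∀ μ, ∑ ν, M μ ν * nabla ν = 0)) ∧
    ((∀ ν, ∑ l, ∑ m, ((g l m : ℂ)) •
        (nabla l * (nabla m * nabla ν - nabla ν * nabla m)
          - (nabla m * nabla ν - nabla ν * nabla m) * nabla l) = 0) →
      (∀ ν, ∑ μ, nabla μ * M μ ν = 0)) :=
  yang_mills_matrix_relations_general s g hsymm hdet B nabla M hM
end

section
/- For s = 1, the Yang-Mills algebra is isomorphic to the universal enveloping algebra of the Heisenberg Lie algebra: the algebra generated by ∇_0, ∇_1 with relations [∇_0,[∇_0,∇_1]] = 0 and [∇_1,[∇_1,∇_0]] = 0 (with Euclidean metric) is isomorphic to the enveloping algebra of the 3-dimensional Lie algebra with basis x, y, z, [x,y] = z, z central. -/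
noncomputable section

open FreeAlgebra

/-- Commutator in an associative algebra (here the free algebra). -/
def acomm {S : Type*} [Ring S] (a b : S) : S :=
  a * b - b * a

/-- The relations of the Yang-Mills algebra for `s = 1` with the Euclidean
metric: `[∇_0,[∇_0,∇_1]] = 0` and `[∇_1,[∇_1,∇_0]] = 0`. -/
def ym1Rel : FreeAlgebra ℂ (Fin 2) → FreeAlgebra ℂ (Fin 2) → Prop :=
  fun x y =>
    (x = acomm (ι ℂ (0 : Fin 2)) (acomm (ι ℂ (0 : Fin 2)) (ι ℂ (1 : Fin 2))) ∨
     x = acomm (ι ℂ (1 : Fin 2)) (acomm (ι ℂ (1 : Fin 2)) (ι ℂ (0 : Fin 2)))) ∧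
    y = 0

/-- The 2-dimensional Yang-Mills algebra. -/
def YM1 : Type := RingQuot ym1Rel

instance : Ring YM1 := by unfold YM1; infer_instance
instance : Algebra ℂ YM1 := by unfold YM1; infer_instance

/-- The relations presenting the universal enveloping algebra of the
Heisenberg Lie algebra (basis `x, y, z` with `[x,y] = z` and `z` central):
generators `x = ι 0`, `y = ι 1`, `z = ι 2` with `xy − yx = z`,
`xz − zx = 0`, `yz − zy = 0`. -/
def heisRel : FreeAlgebra ℂ (Fin 3) → FreeAlgebra ℂ (Fin 3) → Prop :=
  fun a b =>
    (a = acomm (ι ℂ (0 : Fin 3)) (ι ℂ (1 : Fin 3)) ∧ b = ι ℂ (2 : Fin 3)) ∨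
    (a = acomm (ι ℂ (0 : Fin 3)) (ι ℂ (2 : Fin 3)) ∧ b = 0) ∨
    (a = acomm (ι ℂ (1 : Fin 3)) (ι ℂ (2 : Fin 3)) ∧ b = 0)

/-- The universal enveloping algebra of the Heisenberg Lie algebra,
presented by generators and relations. -/
def HeisEnv : Type := RingQuot heisRel

instance : Ring HeisEnv := by unfold HeisEnv; infer_instance
instance : Algebra ℂ HeisEnv := by unfold HeisEnv; infer_instance


lemma map_acomm {F S T : Type*} [Ring S] [Ring T] [FunLike F S T] [RingHomClass F S T]
    (f : F) (a b : S) : f (acomm a b) = acomm (f a) (f b) := by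
  simp [acomm, map_mul, map_sub]

lemma acomm_swap {S : Type*} [Ring S] (a b : S) : acomm b a = - acomm a b := by
  simp [acomm]

/-- abbreviations for the generators -/
def X : HeisEnv := RingQuot.mkAlgHom ℂ heisRel (ι ℂ (0 : Fin 3))
def Y : HeisEnv := RingQuot.mkAlgHom ℂ heisRel (ι ℂ (1 : Fin 3))
def Z : HeisEnv := RingQuot.mkAlgHom ℂ heisRel (ι ℂ (2 : Fin 3))
def A : YM1 := RingQuot.mkAlgHom ℂ ym1Rel (ι ℂ (0 : Fin 2))
def B : YM1 := RingQuot.mkAlgHom ℂ ym1Rel (ι ℂ (1 : Fin 2))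

lemma heis_xy : acomm X Y = Z := by
  rw [X, Y, Z]
  show @acomm (RingQuot heisRel) _ (RingQuot.mkAlgHom ℂ heisRel (ι ℂ (0 : Fin 3))) (RingQuot.mkAlgHom ℂ heisRel (ι ℂ (1 : Fin 3))) = (RingQuot.mkAlgHom ℂ heisRel (ι ℂ (2 : Fin 3)))
  rw [← map_acomm (RingQuot.mkAlgHom ℂ heisRel)]
  exact RingQuot.mkAlgHom_rel ℂ (Or.inl ⟨rfl, rfl⟩)

lemma heis_xz : acomm X Z = 0 := by
  rw [X, Z]
  show @acomm (RingQuot heisRel) _ (RingQuot.mkAlgHom ℂ heisRel (ι ℂ (0 : Fin 3))) (RingQuot.mkAlgHom ℂ heisRel (ι ℂ (2 : Fin 3))) = (0 : RingQuot heisRel)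
  rw [← map_acomm (RingQuot.mkAlgHom ℂ heisRel)]
  have := RingQuot.mkAlgHom_rel (S := ℂ) (s := heisRel)
    (x := acomm (ι ℂ (0 : Fin 3)) (ι ℂ (2 : Fin 3))) (y := 0) (Or.inr (Or.inl ⟨rfl, rfl⟩))
  simpa using this

lemma heis_yz : acomm Y Z = 0 := by
  rw [Y, Z]
  show @acomm (RingQuot heisRel) _ (RingQuot.mkAlgHom ℂ heisRel (ι ℂ (1 : Fin 3))) (RingQuot.mkAlgHom ℂ heisRel (ι ℂ (2 : Fin 3))) = (0 : RingQuot heisRel)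
  rw [← map_acomm (RingQuot.mkAlgHom ℂ heisRel)]
  have := RingQuot.mkAlgHom_rel (S := ℂ) (s := heisRel)
    (x := acomm (ι ℂ (1 : Fin 3)) (ι ℂ (2 : Fin 3))) (y := 0) (Or.inr (Or.inr ⟨rfl, rfl⟩))
  simpa using this

lemma ym_1 : acomm A (acomm A B) = 0 := by
  rw [A, B]
  show @acomm (RingQuot ym1Rel) _ (RingQuot.mkAlgHom ℂ ym1Rel (ι ℂ (0 : Fin 2))) (@acomm (RingQuot ym1Rel) _ (RingQuot.mkAlgHom ℂ ym1Rel (ι ℂ (0 : Fin 2))) (RingQuot.mkAlgHom ℂ ym1Rel (ι ℂ (1 : Fin 2)))) = (0 : RingQuot ym1Rel)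
  rw [← map_acomm (RingQuot.mkAlgHom ℂ ym1Rel), ← map_acomm (RingQuot.mkAlgHom ℂ ym1Rel)]
  have := RingQuot.mkAlgHom_rel (S := ℂ) (s := ym1Rel)
    (x := acomm (ι ℂ (0 : Fin 2)) (acomm (ι ℂ (0 : Fin 2)) (ι ℂ (1 : Fin 2)))) (y := 0)
    ⟨Or.inl rfl, rfl⟩
  simpa using this

lemma ym_2 : acomm B (acomm B A) = 0 := by
  rw [A, B]
  show @acomm (RingQuot ym1Rel) _ (RingQuot.mkAlgHom ℂ ym1Rel (ι ℂ (1 : Fin 2))) (@acomm (RingQuot ym1Rel) _ (RingQuot.mkAlgHom ℂ ym1Rel (ι ℂ (1 : Fin 2))) (RingQuot.mkAlgHom ℂ ym1Rel (ι ℂ (0 : Fin 2)))) = (0 : RingQuot ym1Rel)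
  rw [← map_acomm (RingQuot.mkAlgHom ℂ ym1Rel), ← map_acomm (RingQuot.mkAlgHom ℂ ym1Rel)]
  have := RingQuot.mkAlgHom_rel (S := ℂ) (s := ym1Rel)
    (x := acomm (ι ℂ (1 : Fin 2)) (acomm (ι ℂ (1 : Fin 2)) (ι ℂ (0 : Fin 2)))) (y := 0)
    ⟨Or.inr rfl, rfl⟩
  simpa using this

lemma acomm_neg {S : Type*} [Ring S] (a b : S) : acomm a (-b) = - acomm a b := by
  unfold acomm; noncomm_ring

lemma ym_2' : acomm B (acomm A B) = 0 := by
  rw [acomm_swap B A, acomm_neg, ym_2, neg_zero]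

/-- forward map on free algebra -/
def fwdFree : FreeAlgebra ℂ (Fin 2) →ₐ[ℂ] HeisEnv :=
  FreeAlgebra.lift ℂ (fun i => if i = 0 then X else Y)

/-- backward map on free algebra -/
def bwdFree : FreeAlgebra ℂ (Fin 3) →ₐ[ℂ] YM1 :=
  FreeAlgebra.lift ℂ (fun i => if i = 0 then A else if i = 1 then B else acomm A B)

lemma fwdFree_ι0 : fwdFree (ι ℂ (0 : Fin 2)) = X := by simp [fwdFree]
lemma fwdFree_ι1 : fwdFree (ι ℂ (1 : Fin 2)) = Y := by simp [fwdFree]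
lemma bwdFree_ι0 : bwdFree (ι ℂ (0 : Fin 3)) = A := by simp [bwdFree]
lemma bwdFree_ι1 : bwdFree (ι ℂ (1 : Fin 3)) = B := by simp [bwdFree]
lemma bwdFree_ι2 : bwdFree (ι ℂ (2 : Fin 3)) = acomm A B := by simp [bwdFree]

lemma fwdFree_resp : ∀ ⦃a b⦄, ym1Rel a b → fwdFree a = fwdFree b := by
  rintro a b ⟨h | h, rfl⟩ <;> subst h <;>
    rw [map_acomm, map_acomm, map_zero]
  · rw [fwdFree_ι0, fwdFree_ι1, heis_xy, heis_xz]
  · rw [fwdFree_ι1, fwdFree_ι0, acomm_swap X Y, acomm_neg, heis_xy, heis_yz, neg_zero]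

lemma bwdFree_resp : ∀ ⦃a b⦄, heisRel a b → bwdFree a = bwdFree b := by
  rintro a b (⟨rfl, rfl⟩ | ⟨rfl, rfl⟩ | ⟨rfl, rfl⟩)
  · rw [map_acomm, bwdFree_ι0, bwdFree_ι1, bwdFree_ι2]
  · rw [map_acomm, map_zero, bwdFree_ι0, bwdFree_ι2]
    exact ym_1
  · rw [map_acomm, map_zero, bwdFree_ι1, bwdFree_ι2]
    exact ym_2'

/-- forward map -/
def fwd : YM1 →ₐ[ℂ] HeisEnv :=
  RingQuot.liftAlgHom ℂ ⟨fwdFree, fwdFree_resp⟩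

/-- backward map -/
def bwd : HeisEnv →ₐ[ℂ] YM1 :=
  RingQuot.liftAlgHom ℂ ⟨bwdFree, bwdFree_resp⟩

lemma fwd_mk (w : FreeAlgebra ℂ (Fin 2)) :
    fwd (RingQuot.mkAlgHom ℂ ym1Rel w) = fwdFree w :=
  RingQuot.liftAlgHom_mkAlgHom_apply ℂ _ _ _

lemma bwd_mk (w : FreeAlgebra ℂ (Fin 3)) :
    bwd (RingQuot.mkAlgHom ℂ heisRel w) = bwdFree w :=
  RingQuot.liftAlgHom_mkAlgHom_apply ℂ _ _ _

lemma fwd_A : fwd A = X := by rw [A, fwd_mk, fwdFree_ι0]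
lemma fwd_B : fwd B = Y := by rw [B, fwd_mk, fwdFree_ι1]

lemma bwd_fwd : bwd.comp fwd = AlgHom.id ℂ YM1 := by
  apply RingQuot.ringQuot_ext'
  apply FreeAlgebra.hom_ext
  funext i
  fin_cases i <;>
    simp only [AlgHom.comp_apply, AlgHom.coe_comp, Function.comp_apply, AlgHom.id_apply,
      Fin.zero_eta, Fin.mk_one]
  · have : bwd (fwd A) = A := by rw [fwd_A, X, bwd_mk, bwdFree_ι0]
    exact this
  · have : bwd (fwd B) = B := by rw [fwd_B, Y, bwd_mk, bwdFree_ι1]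
    exact this

lemma fwd_bwd : fwd.comp bwd = AlgHom.id ℂ HeisEnv := by
  apply RingQuot.ringQuot_ext'
  apply FreeAlgebra.hom_ext
  funext i
  fin_cases i <;>
    simp only [AlgHom.comp_apply, AlgHom.coe_comp, Function.comp_apply, AlgHom.id_apply,
      Fin.zero_eta, Fin.mk_one]
  · have : fwd (bwd X) = X := by rw [X, bwd_mk, bwdFree_ι0, fwd_A, X]
    exact this
  · have : fwd (bwd Y) = Y := by rw [Y, bwd_mk, bwdFree_ι1, fwd_B, Y]
    exact this
  · have : fwd (bwd Z) = Z := by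
      rw [Z, bwd_mk, bwdFree_ι2, map_acomm fwd, fwd_A, fwd_B, heis_xy, Z]
    exact this

/-- for `s = 1` (Euclidean metric), the Yang-Mills algebra is
isomorphic, as a ℂ-algebra, to the universal enveloping algebra of the
Heisenberg Lie algebra, via `∇_0 ↦ x`, `∇_1 ↦ y`. -/
theorem yang_mills_s1_iso_heisenberg :
    ∃ φ : YM1 ≃ₐ[ℂ] HeisEnv,
      φ (RingQuot.mkAlgHom ℂ ym1Rel (ι ℂ (0 : Fin 2))) =
        RingQuot.mkAlgHom ℂ heisRel (ι ℂ (0 : Fin 3)) ∧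
      φ (RingQuot.mkAlgHom ℂ ym1Rel (ι ℂ (1 : Fin 2))) =
        RingQuot.mkAlgHom ℂ heisRel (ι ℂ (1 : Fin 3)) := by
  refine ⟨AlgEquiv.ofAlgHom fwd bwd fwd_bwd bwd_fwd, ?_, ?_⟩
  · exact fwd_A
  · exact fwd_B

end
end

section
/- There is a surjective algebra homomorphism from the cubic Yang-Mills algebra A (s = 3, Euclidean metric) onto the quadratic self-duality algebra A^{(+)} sending generators to generators. -/
/-!
Self-duality `[∇_0, ∇_k] = [∇_ℓ, ∇_m]` turns each Yang–Mills expression `Σ_μ [∇_μ, [∇_μ, ∇_ν]]`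
into the Jacobi identity for the three generators other than `∇_ν` (the Bianchi identity).
Hence the Yang–Mills relations hold in `A⁽⁺⁾`, the identity on generators descends to an algebra
map `A → A⁽⁺⁾`, and it is onto because `A⁽⁺⁾` is generated by the `∇_μ`.
-/

noncomputable section

open FreeAlgebra

/-- The relations of the cubic Yang-Mills algebra for `s = 3` with the
Euclidean metric: `Σ_μ [∇_μ,[∇_μ,∇_ν]] = 0` for all `ν`. -/
def ym4Rel : FreeAlgebra ℂ (Fin 4) → FreeAlgebra ℂ (Fin 4) → Prop :=
  fun x y => (∃ ν : Fin 4,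
    x = ∑ μ : Fin 4,
      (ι ℂ μ * (ι ℂ μ * ι ℂ ν - ι ℂ ν * ι ℂ μ)
        - (ι ℂ μ * ι ℂ ν - ι ℂ ν * ι ℂ μ) * ι ℂ μ)) ∧ y = 0

/-- The 4-dimensional Euclidean Yang-Mills algebra. -/
def YM4 : Type := RingQuot ym4Rel

instance : Ring YM4 := by unfold YM4; infer_instance
instance : Algebra ℂ YM4 := by unfold YM4; infer_instance

/-- The relations of the quadratic self-duality algebra:
`[∇_0,∇_k] = [∇_ℓ,∇_m]` for every cyclic permutation `(k,ℓ,m)` of `(1,2,3)`. -/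
def sdRel : FreeAlgebra ℂ (Fin 4) → FreeAlgebra ℂ (Fin 4) → Prop :=
  fun x y =>
    (x = ι ℂ (0 : Fin 4) * ι ℂ (1 : Fin 4) - ι ℂ (1 : Fin 4) * ι ℂ (0 : Fin 4) ∧
     y = ι ℂ (2 : Fin 4) * ι ℂ (3 : Fin 4) - ι ℂ (3 : Fin 4) * ι ℂ (2 : Fin 4)) ∨
    (x = ι ℂ (0 : Fin 4) * ι ℂ (2 : Fin 4) - ι ℂ (2 : Fin 4) * ι ℂ (0 : Fin 4) ∧
     y = ι ℂ (3 : Fin 4) * ι ℂ (1 : Fin 4) - ι ℂ (1 : Fin 4) * ι ℂ (3 : Fin 4)) ∨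
    (x = ι ℂ (0 : Fin 4) * ι ℂ (3 : Fin 4) - ι ℂ (3 : Fin 4) * ι ℂ (0 : Fin 4) ∧
     y = ι ℂ (1 : Fin 4) * ι ℂ (2 : Fin 4) - ι ℂ (2 : Fin 4) * ι ℂ (1 : Fin 4))

/-- The quadratic self-duality algebra `A⁽⁺⁾`. -/
def SD : Type := RingQuot sdRel

instance : Ring SD := by unfold SD; infer_instance
instance : Algebra ℂ SD := by unfold SD; infer_instance

section LieRing

variable {L : Type*} [LieRing L]

def IsSelfDual (a : Fin 4 → L) : Prop :=
  ⁅a 0, a 1⁆ = ⁅a 2, a 3⁆ ∧ ⁅a 0, a 2⁆ = ⁅a 3, a 1⁆ ∧ ⁅a 0, a 3⁆ = ⁅a 1, a 2⁆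

def IsYangMills (a : Fin 4 → L) : Prop :=
  ∀ ν, ∑ μ, ⁅a μ, ⁅a μ, a ν⁆⁆ = 0

theorem lie_swap_eq_lie_swap_of_eq {x y z w : L} (h : ⁅x, y⁆ = ⁅z, w⁆) : ⁅y, x⁆ = ⁅w, z⁆ := by
  rw [← lie_skew, h, lie_skew]

theorem IsSelfDual.isYangMills {a : Fin 4 → L} (h : IsSelfDual a) : IsYangMills a := by
  obtain ⟨h₁, h₂, h₃⟩ := h
  intro ν
  fin_cases ν <;> simp only [Fin.sum_univ_four, lie_self, lie_zero, zero_add, add_zero,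
    Fin.isValue, Fin.zero_eta, Fin.mk_one, Fin.reduceFinMk]
  · rw [lie_swap_eq_lie_swap_of_eq h₁, lie_swap_eq_lie_swap_of_eq h₂,
      lie_swap_eq_lie_swap_of_eq h₃]
    linear_combination (norm := abel) lie_jacobi (a 1) (a 3) (a 2)
  · rw [h₁, lie_swap_eq_lie_swap_of_eq h₃.symm, ← h₂]
    linear_combination (norm := abel) lie_jacobi (a 0) (a 2) (a 3)
  · rw [h₂, ← h₃, lie_swap_eq_lie_swap_of_eq h₁.symm]
    linear_combination (norm := abel) lie_jacobi (a 0) (a 3) (a 1)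
  · rw [h₃, lie_swap_eq_lie_swap_of_eq h₂.symm, ← h₁]
    linear_combination (norm := abel) lie_jacobi (a 0) (a 1) (a 2)

end LieRing

attribute [local instance] LieRing.ofAssociativeRing

-- Typed in `RingQuot sdRel`, not `SD`: the `Ring SD` instance is not reducibly the quotient's,
-- so simp lemmas about `RingQuot.mkAlgHom` would not fire on it.
def sdGen (l : Fin 4) : RingQuot sdRel := RingQuot.mkAlgHom ℂ sdRel (ι ℂ l)

theorem isSelfDual_sdGen : IsSelfDual sdGen := by
  refine ⟨?_, ?_, ?_⟩ <;>
    simp only [sdGen, LieRing.of_associative_ring_bracket, ← map_mul, ← map_sub] <;>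
    apply RingQuot.mkAlgHom_rel ℂ
  exacts [Or.inl ⟨rfl, rfl⟩, Or.inr (Or.inl ⟨rfl, rfl⟩), Or.inr (Or.inr ⟨rfl, rfl⟩)]

theorem mkAlgHom_sdRel_eq_of_ym4Rel ⦃x y : FreeAlgebra ℂ (Fin 4)⦄ (h : ym4Rel x y) :
    RingQuot.mkAlgHom ℂ sdRel x = RingQuot.mkAlgHom ℂ sdRel y := by
  obtain ⟨⟨ν, rfl⟩, rfl⟩ := h
  simpa only [map_sum, map_sub, map_mul, map_zero, sdGen, LieRing.of_associative_ring_bracket]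
    using isSelfDual_sdGen.isYangMills ν

def ym4ToSD : YM4 →ₐ[ℂ] SD :=
  RingQuot.liftAlgHom ℂ ⟨RingQuot.mkAlgHom ℂ sdRel, mkAlgHom_sdRel_eq_of_ym4Rel⟩

theorem ym4ToSD_mkAlgHom (x : FreeAlgebra ℂ (Fin 4)) :
    ym4ToSD (RingQuot.mkAlgHom ℂ ym4Rel x) = RingQuot.mkAlgHom ℂ sdRel x :=
  RingQuot.liftAlgHom_mkAlgHom_apply ℂ _ _ x

/-- there is a surjective ℂ-algebra homomorphism from the
cubic Yang-Mills algebra `A` (`s = 3`, Euclidean metric) onto the quadratic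
self-duality algebra `A⁽⁺⁾` sending generators to generators. -/
theorem yang_mills_onto_self_duality :
    ∃ φ : YM4 →ₐ[ℂ] SD, Function.Surjective φ ∧
      ∀ l : Fin 4, φ (RingQuot.mkAlgHom ℂ ym4Rel (ι ℂ l)) =
        RingQuot.mkAlgHom ℂ sdRel (ι ℂ l) := by
  refine ⟨ym4ToSD, fun z => ?_, fun l => ym4ToSD_mkAlgHom (ι ℂ l)⟩
  obtain ⟨x, rfl⟩ := RingQuot.mkAlgHom_surjective ℂ sdRel z
  exact ⟨_, ym4ToSD_mkAlgHom x⟩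

end
end

section
/- The quadratic self-duality algebra A^{(+)} is isomorphic to the Ore extension (crossed product) of the free associative algebra ℂ⟨∇_1,∇_2,∇_3⟩ by the derivation δ with δ(∇_k) = [∇_ℓ,∇_m] for each cyclic permutation (k,ℓ,m) of (1,2,3), the extra variable ∇_0 acting by δ. Equivalently, A^{(+)} is the universal enveloping algebra of the semidirect product of the free Lie algebra on three generators by this degree-1 derivation. -/
noncomputable section

open FreeAlgebra

/-- The generators `∇_λ` of `A⁽⁺⁾`. -/
def nb (l : Fin 4) : SD := RingQuot.mkAlgHom ℂ sdRel (ι ℂ l)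

/-- The free associative algebra `ℂ⟨∇_1,∇_2,∇_3⟩` on three generators. -/
abbrev F3 : Type := FreeAlgebra ℂ (Fin 3)

/-! ### The derivation δ, via the trivial square-zero extension -/

def brkt : Fin 3 → F3
  | 0 => ι ℂ (1 : Fin 3) * ι ℂ (2 : Fin 3) - ι ℂ (2 : Fin 3) * ι ℂ (1 : Fin 3)
  | 1 => ι ℂ (2 : Fin 3) * ι ℂ (0 : Fin 3) - ι ℂ (0 : Fin 3) * ι ℂ (2 : Fin 3)
  | 2 => ι ℂ (0 : Fin 3) * ι ℂ (1 : Fin 3) - ι ℂ (1 : Fin 3) * ι ℂ (0 : Fin 3)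

def φ : F3 →ₐ[ℂ] TrivSqZeroExt F3 F3 :=
  FreeAlgebra.lift ℂ fun k => TrivSqZeroExt.inl (ι ℂ k) + TrivSqZeroExt.inr (brkt k)

lemma φ_fst (a : F3) : (φ a).fst = a := by
  have : (TrivSqZeroExt.fstHom ℂ F3 F3).comp φ = AlgHom.id ℂ F3 := by
    apply FreeAlgebra.hom_ext
    funext k
    simp [φ]
  exact congrArg (fun g => g a) (congrArg DFunLike.coe this)

def δd : F3 →ₗ[ℂ] F3 where
  toFun a := (φ a).snd
  map_add' a b := by simp
  map_smul' c a := by simp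

lemma δd_mul (a b : F3) : δd (a * b) = δd a * b + a * δd b := by
  show (φ (a*b)).snd = _
  rw [map_mul, TrivSqZeroExt.snd_mul, φ_fst, φ_fst]
  show a • (φ b).snd + (φ a).snd * b = (φ a).snd * b + a * (φ b).snd
  rw [smul_eq_mul]; abel

lemma δd_ι (k : Fin 3) : δd (ι ℂ k) = brkt k := by
  show (φ (ι ℂ k)).snd = _
  simp [φ]

lemma δd_one : δd 1 = 0 := by
  have h := δd_mul 1 1
  simp at h
  exact h

/-! ### The faithful module: `F3[t]` as `ℕ →₀ F3` -/

abbrev M : Type := ℕ →₀ F3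

def L : F3 →ₐ[ℂ] Module.End ℂ M := Algebra.lsmul ℂ ℂ M (A := F3)

lemma L_apply_single (a b : F3) (n : ℕ) :
    L a (Finsupp.single n b) = Finsupp.single n (a * b) := by
  show a • Finsupp.single n b = _
  rw [Finsupp.smul_single]; rfl

def D : Module.End ℂ M :=
  Finsupp.mapRange.linearMap δd + Finsupp.lmapDomain F3 ℂ (· + 1)

lemma D_single (n : ℕ) (b : F3) :
    D (Finsupp.single n b) = Finsupp.single n (δd b) + Finsupp.single (n+1) b := by
  simp [D, Finsupp.mapDomain_single]

lemma D_comm_L (a : F3) : D * L a = L a * D + L (δd a) := by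
  apply Finsupp.lhom_ext
  intro n b
  rw [Module.End.mul_apply, LinearMap.add_apply, Module.End.mul_apply,
    L_apply_single, D_single, D_single, map_add, L_apply_single, L_apply_single,
    L_apply_single, δd_mul, Finsupp.single_add]
  abel

lemma D_pow_single (n : ℕ) : (D ^ n) (Finsupp.single 0 (1 : F3)) = Finsupp.single n 1 := by
  induction n with
  | zero => simp
  | succ n ih =>
    rw [pow_succ', Module.End.mul_apply, ih, D_single, δd_one]
    simp

/-! ### The representation of SD on M -/

def gen : Fin 4 → Module.End ℂ M
  | 0 => D
  | 1 => L (ι ℂ (0 : Fin 3))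
  | 2 => L (ι ℂ (1 : Fin 3))
  | 3 => L (ι ℂ (2 : Fin 3))

def liftE : FreeAlgebra ℂ (Fin 4) →ₐ[ℂ] Module.End ℂ M := FreeAlgebra.lift ℂ gen

lemma liftE_rel : ∀ ⦃x y⦄, sdRel x y → liftE x = liftE y := by
  rintro x y (⟨rfl, rfl⟩ | ⟨rfl, rfl⟩ | ⟨rfl, rfl⟩) <;>
  · simp only [map_sub, map_mul, liftE, FreeAlgebra.lift_ι_apply]
    show gen 0 * gen _ - gen _ * gen 0 = gen _ * gen _ - gen _ * gen _
    simp only [gen]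
    rw [D_comm_L, δd_ι]
    simp only [brkt, map_sub, map_mul]
    abel

def Φ : SD →ₐ[ℂ] Module.End ℂ M := RingQuot.liftAlgHom ℂ ⟨liftE, liftE_rel⟩

lemma Φ_nb (l : Fin 4) : Φ (nb l) = gen l := by
  show RingQuot.liftAlgHom ℂ ⟨liftE, liftE_rel⟩ (RingQuot.mkAlgHom ℂ sdRel (ι ℂ l)) = gen l
  rw [RingQuot.liftAlgHom_mkAlgHom_apply, liftE, FreeAlgebra.lift_ι_apply]

/-! ### The embedding j and commutation -/

def jgen : Fin 3 → SD
  | 0 => nb 1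
  | 1 => nb 2
  | 2 => nb 3

def jmap : F3 →ₐ[ℂ] SD := FreeAlgebra.lift ℂ jgen

lemma jmap_ι (k : Fin 3) : jmap (ι ℂ k) = jgen k := FreeAlgebra.lift_ι_apply _ _

lemma sd_rel1 : nb 0 * nb 1 - nb 1 * nb 0 = nb 2 * nb 3 - nb 3 * nb 2 := by
  have hrel : sdRel (ι ℂ (0:Fin 4) * ι ℂ 1 - ι ℂ 1 * ι ℂ 0)
      (ι ℂ 2 * ι ℂ 3 - ι ℂ 3 * ι ℂ 2) := Or.inl ⟨rfl, rfl⟩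
  have h := RingQuot.mkAlgHom_rel ℂ (s := sdRel) hrel
  simp only [map_sub, map_mul, nb] at h ⊢; exact h

lemma sd_rel2 : nb 0 * nb 2 - nb 2 * nb 0 = nb 3 * nb 1 - nb 1 * nb 3 := by
  have hrel : sdRel (ι ℂ (0:Fin 4) * ι ℂ 2 - ι ℂ 2 * ι ℂ 0)
      (ι ℂ 3 * ι ℂ 1 - ι ℂ 1 * ι ℂ 3) := Or.inr (Or.inl ⟨rfl, rfl⟩)
  have h := RingQuot.mkAlgHom_rel ℂ (s := sdRel) hrel
  simp only [map_sub, map_mul, nb] at h ⊢; exact h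

lemma sd_rel3 : nb 0 * nb 3 - nb 3 * nb 0 = nb 1 * nb 2 - nb 2 * nb 1 := by
  have hrel : sdRel (ι ℂ (0:Fin 4) * ι ℂ 3 - ι ℂ 3 * ι ℂ 0)
      (ι ℂ 1 * ι ℂ 2 - ι ℂ 2 * ι ℂ 1) := Or.inr (Or.inr ⟨rfl, rfl⟩)
  have h := RingQuot.mkAlgHom_rel ℂ (s := sdRel) hrel
  simp only [map_sub, map_mul, nb] at h ⊢; exact h

lemma δd_algebraMap (r : ℂ) : δd (algebraMap ℂ F3 r) = 0 := by
  rw [Algebra.algebraMap_eq_smul_one, map_smul, δd_one, smul_zero]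

lemma comm_j (a : F3) : nb 0 * jmap a - jmap a * nb 0 = jmap (δd a) := by
  induction a using FreeAlgebra.induction with
  | grade0 r => rw [δd_algebraMap]; simp [Algebra.commutes]
  | grade1 k =>
    rw [δd_ι, jmap_ι]
    fin_cases k
    · show nb 0 * nb 1 - nb 1 * nb 0 = jmap (brkt 0)
      rw [sd_rel1]; simp [brkt, map_sub, map_mul, jmap_ι]; rfl
    · show nb 0 * nb 2 - nb 2 * nb 0 = jmap (brkt 1)
      rw [sd_rel2]; simp [brkt, map_sub, map_mul, jmap_ι]; rfl
    · show nb 0 * nb 3 - nb 3 * nb 0 = jmap (brkt 2)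
      rw [sd_rel3]; simp [brkt, map_sub, map_mul, jmap_ι]; rfl
  | mul a b ha hb =>
    rw [δd_mul, map_add, map_mul, map_mul, map_mul, ← ha, ← hb]
    noncomm_ring
  | add a b ha hb =>
    rw [map_add, map_add, map_add, ← ha, ← hb]
    noncomm_ring

/-! ### Φ ∘ j = L and injectivity -/

lemma Φ_j (a : F3) : Φ (jmap a) = L a := by
  have : Φ.comp jmap = L := by
    apply FreeAlgebra.hom_ext
    funext k
    show Φ (jmap (ι ℂ k)) = L (ι ℂ k)
    rw [jmap_ι]
    fin_cases k
    · show Φ (nb 1) = _; rw [Φ_nb]; rfl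
    · show Φ (nb 2) = _; rw [Φ_nb]; rfl
    · show Φ (nb 3) = _; rw [Φ_nb]; rfl
  exact congrArg (fun g => g a) (congrArg DFunLike.coe this)

lemma Φ_nb0 : Φ (nb 0) = D := Φ_nb 0

lemma Phi_B (f : ℕ →₀ F3) :
    Φ (f.sum fun n a => jmap a * nb 0 ^ n) (Finsupp.single 0 1) = f := by
  rw [map_finsuppSum]
  classical
  rw [Finsupp.sum, LinearMap.coe_sum, Finset.sum_apply]
  have : ∀ n ∈ f.support, Φ (jmap (f n) * nb 0 ^ n) (Finsupp.single 0 1)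
      = Finsupp.single n (f n) := by
    intro n _
    rw [map_mul, map_pow, Φ_j, Φ_nb0, Module.End.mul_apply, D_pow_single, L_apply_single, mul_one]
  rw [Finset.sum_congr rfl this]
  exact Finsupp.sum_single f

/-! ### the linear version of the sum map and its range -/

def Blin : (ℕ →₀ F3) →ₗ[ℂ] SD :=
  Finsupp.lsum ℂ fun n => ((Algebra.lmul ℂ SD).toLinearMap.flip (nb 0 ^ n)).comp jmap.toLinearMap

lemma Blin_apply (f : ℕ →₀ F3) : Blin f = f.sum fun n a => jmap a * nb 0 ^ n := by
  simp [Blin, Finsupp.lsum_apply, Finsupp.sum, LinearMap.mulRight_apply]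

def S : Submodule ℂ SD := LinearMap.range Blin

lemma mem_single (n : ℕ) (b : F3) : jmap b * nb 0 ^ n ∈ S := by
  refine ⟨Finsupp.single n b, ?_⟩
  rw [Blin_apply, Finsupp.sum_single_index]
  simp

lemma hr0 {x : SD} (hx : x ∈ S) : x * nb 0 ∈ S := by
  obtain ⟨f, rfl⟩ := hx
  refine ⟨Finsupp.mapDomain (· + 1) f, ?_⟩
  rw [Blin_apply, Blin_apply, Finsupp.sum_mapDomain_index_inj (add_left_injective 1)]
  erw [Finsupp.sum_mul]
  exact Finset.sum_congr rfl fun n _ => by dsimp only; rw [pow_succ, mul_assoc]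

lemma hlj (a : F3) {x : SD} (hx : x ∈ S) : jmap a * x ∈ S := by
  obtain ⟨f, rfl⟩ := hx
  refine ⟨Finsupp.mapRange (a * ·) (mul_zero a) f, ?_⟩
  rw [Blin_apply, Blin_apply, Finsupp.sum_mapRange_index (by simp)]
  erw [Finsupp.mul_sum]
  exact Finset.sum_congr rfl fun n _ => by dsimp only; rw [map_mul, mul_assoc]

lemma key (n : ℕ) : ∀ b : F3, nb 0 ^ n * jmap b ∈ S := by
  induction n with
  | zero => intro b; rw [pow_zero, one_mul]; simpa using mem_single 0 b
  | succ n ih =>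
    intro b
    have h : nb 0 * jmap b = jmap b * nb 0 + jmap (δd b) := by
      have hc := comm_j b
      rw [← hc]; noncomm_ring
    rw [pow_succ, mul_assoc, h, mul_add, ← mul_assoc]
    exact add_mem (hr0 (ih b)) (ih (δd b))

lemma hrj {x : SD} (hx : x ∈ S) (b : F3) : x * jmap b ∈ S := by
  obtain ⟨f, rfl⟩ := hx
  rw [Blin_apply]
  erw [Finsupp.sum_mul]
  refine Submodule.sum_mem S fun n _ => ?_
  dsimp only
  rw [mul_assoc]
  exact hlj _ (key n b)

lemma hrpow {x : SD} (hx : x ∈ S) (n : ℕ) : x * nb 0 ^ n ∈ S := by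
  induction n with
  | zero => simpa using hx
  | succ n ih => rw [pow_succ, ← mul_assoc]; exact hr0 ih

lemma hmul {x y : SD} (hx : x ∈ S) (hy : y ∈ S) : x * y ∈ S := by
  obtain ⟨g, rfl⟩ := hy
  rw [Blin_apply]
  erw [Finsupp.mul_sum]
  refine Submodule.sum_mem S fun n _ => ?_
  dsimp only
  rw [← mul_assoc]
  exact hrpow (hrj hx (g n)) n

lemma one_mem_S : (1 : SD) ∈ S := by simpa using mem_single 0 1

lemma nb_mem_S (l : Fin 4) : nb l ∈ S := by
  fin_cases l
  · refine ⟨Finsupp.single 1 1, ?_⟩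
    rw [Blin_apply, Finsupp.sum_single_index] <;> simp
  · have := mem_single 0 (ι ℂ (0 : Fin 3)); rw [pow_zero, mul_one, jmap_ι] at this; exact this
  · have := mem_single 0 (ι ℂ (1 : Fin 3)); rw [pow_zero, mul_one, jmap_ι] at this; exact this
  · have := mem_single 0 (ι ℂ (2 : Fin 3)); rw [pow_zero, mul_one, jmap_ι] at this; exact this

lemma S_top (x : SD) : x ∈ S := by
  obtain ⟨y, rfl⟩ := RingQuot.mkAlgHom_surjective ℂ sdRel x
  induction y using FreeAlgebra.induction with
  | grade0 r =>
    rw [AlgHom.commutes, Algebra.algebraMap_eq_smul_one]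
    exact Submodule.smul_mem S r one_mem_S
  | grade1 k => exact nb_mem_S k
  | mul a b ha hb => rw [map_mul]; exact hmul ha hb
  | add a b ha hb => rw [map_add]; exact add_mem ha hb

/-- the quadratic self-duality algebra `A⁽⁺⁾` is the Ore
extension `ℂ⟨∇_1,∇_2,∇_3⟩[∇_0; δ]` of the free algebra on three generators
by the derivation `δ` with `δ(∇_k) = [∇_ℓ,∇_m]` for each cyclic permutation
`(k,ℓ,m)` of `(1,2,3)` (equivalently, the enveloping algebra of the
semidirect product of the free Lie algebra on three generators by `δ`):
there is a derivation `δ` of `ℂ⟨∇_1,∇_2,∇_3⟩` with the above values on the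
generators and an algebra embedding `j : ℂ⟨∇_1,∇_2,∇_3⟩ → A⁽⁺⁾` sending
generators to `∇_1,∇_2,∇_3`, such that `∇_0 j(a) − j(a) ∇_0 = j(δ a)` for
all `a`, and such that every element of `A⁽⁺⁾` is uniquely of the form
`Σ_n j(a_n) ∇_0^n`. -/
theorem sd_is_ore_extension :
    ∃ (j : F3 →ₐ[ℂ] SD) (δ : F3 →ₗ[ℂ] F3),
      (∀ a b : F3, δ (a * b) = δ a * b + a * δ b) ∧
      δ (ι ℂ (0 : Fin 3)) =
        ι ℂ (1 : Fin 3) * ι ℂ (2 : Fin 3) - ι ℂ (2 : Fin 3) * ι ℂ (1 : Fin 3) ∧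
      δ (ι ℂ (1 : Fin 3)) =
        ι ℂ (2 : Fin 3) * ι ℂ (0 : Fin 3) - ι ℂ (0 : Fin 3) * ι ℂ (2 : Fin 3) ∧
      δ (ι ℂ (2 : Fin 3)) =
        ι ℂ (0 : Fin 3) * ι ℂ (1 : Fin 3) - ι ℂ (1 : Fin 3) * ι ℂ (0 : Fin 3) ∧
      j (ι ℂ (0 : Fin 3)) = nb 1 ∧
      j (ι ℂ (1 : Fin 3)) = nb 2 ∧
      j (ι ℂ (2 : Fin 3)) = nb 3 ∧
      (∀ a : F3, nb 0 * j a - j a * nb 0 = j (δ a)) ∧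
      Function.Bijective
        (fun f : ℕ →₀ F3 => f.sum fun n a => j a * nb 0 ^ n) := by
  refine ⟨jmap, δd, δd_mul, δd_ι 0, δd_ι 1, δd_ι 2, jmap_ι 0, jmap_ι 1, jmap_ι 2, comm_j, ?_, ?_⟩
  · intro f g h
    have h' := congrArg (fun z => Φ z (Finsupp.single 0 1)) h
    dsimp only at h'
    rwa [Phi_B, Phi_B] at h'
  · intro x
    obtain ⟨f, hf⟩ := S_top x
    exact ⟨f, by dsimp only; rw [← Blin_apply, hf]⟩


end
end

section
/- Exactness of the middle of the Koszul resolution of A^{(+)}: if x = (x_0,x_1,x_2,x_3) ∈ (A^{(+)})⁴ (row vector) satisfies Σ_λ x_λ ∇_λ = 0, then there exists y ∈ (A^{(+)})³ with x = yN, where N is the matrix with rows (−∇_1,∇_0,∇_3,−∇_2), (−∇_2,−∇_3,∇_0,∇_1), (−∇_3,∇_2,−∇_1,∇_0). -/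
noncomputable section

open FreeAlgebra

/-- The matrix `N` of the Koszul complex of the self-duality algebra. -/
def Nmat : Matrix (Fin 3) (Fin 4) SD :=
  !![-nb 1,  nb 0,  nb 3, -nb 2;
     -nb 2, -nb 3,  nb 0,  nb 1;
     -nb 3,  nb 2, -nb 1,  nb 0]

/-! ### Auxiliary development for the proof -/

local notation "FA" => FreeAlgebra ℂ (Fin 4)
local notation "MA" => MonoidAlgebra ℂ (FreeMonoid (Fin 4))

/-- The projection of the free algebra onto the quotient `SD`. -/
def piSD : FA →ₐ[ℂ] SD := RingQuot.mkAlgHom ℂ sdRel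

lemma pi_iota (l : Fin 4) : piSD (ι ℂ l) = nb l := rfl

lemma piSD_rel {x y : FreeAlgebra ℂ (Fin 4)} (h : sdRel x y) : piSD x = piSD y :=
  RingQuot.mkAlgHom_rel ℂ h

/-- The lift of `Nmat` to the free algebra. -/
def Ntf : Matrix (Fin 3) (Fin 4) FA :=
  !![-(ι ℂ 1),  ι ℂ 0,  ι ℂ 3, -(ι ℂ 2);
     -(ι ℂ 2), -(ι ℂ 3),  ι ℂ 0,  ι ℂ 1;
     -(ι ℂ 3),  ι ℂ 2, -(ι ℂ 1),  ι ℂ 0]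

lemma pi_Ntf (i : Fin 3) (j : Fin 4) : piSD (Ntf i j) = Nmat i j := by
  fin_cases i <;> fin_cases j <;>
    simp [Ntf, Nmat, nb, piSD, map_neg] <;> first | rfl | exact map_neg _ _

lemma row0 : ∑ j : Fin 4, Ntf 0 j * ι ℂ j =
    (ι ℂ (0:Fin 4) * ι ℂ 1 - ι ℂ 1 * ι ℂ 0) - (ι ℂ 2 * ι ℂ 3 - ι ℂ 3 * ι ℂ 2) := by
  rw [Fin.sum_univ_four]
  simp only [Ntf, Matrix.cons_val_zero, Matrix.cons_val_one, Matrix.cons_val_two,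
    Matrix.cons_val_three, Matrix.head_cons, Matrix.of_apply, Matrix.cons_val',
    Matrix.empty_val', Matrix.cons_val_fin_one, Matrix.head_fin_const, Matrix.vecTail,
    Matrix.vecHead, Function.comp, Matrix.cons_val_succ]
  noncomm_ring

lemma row1 : ∑ j : Fin 4, Ntf 1 j * ι ℂ j =
    (ι ℂ (0:Fin 4) * ι ℂ 2 - ι ℂ 2 * ι ℂ 0) - (ι ℂ 3 * ι ℂ 1 - ι ℂ 1 * ι ℂ 3) := by
  rw [Fin.sum_univ_four]
  simp only [Ntf, Matrix.cons_val_zero, Matrix.cons_val_one, Matrix.cons_val_two,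
    Matrix.cons_val_three, Matrix.head_cons, Matrix.of_apply, Matrix.cons_val',
    Matrix.empty_val', Matrix.cons_val_fin_one, Matrix.head_fin_const, Matrix.vecTail,
    Matrix.vecHead, Function.comp, Matrix.cons_val_succ]
  noncomm_ring

lemma row2 : ∑ j : Fin 4, Ntf 2 j * ι ℂ j =
    (ι ℂ (0:Fin 4) * ι ℂ 3 - ι ℂ 3 * ι ℂ 0) - (ι ℂ 1 * ι ℂ 2 - ι ℂ 2 * ι ℂ 1) := by
  rw [Fin.sum_univ_four]
  simp only [Ntf, Matrix.cons_val_zero, Matrix.cons_val_one, Matrix.cons_val_two,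
    Matrix.cons_val_three, Matrix.head_cons, Matrix.of_apply, Matrix.cons_val',
    Matrix.empty_val', Matrix.cons_val_fin_one, Matrix.head_fin_const, Matrix.vecTail,
    Matrix.vecHead, Function.comp, Matrix.cons_val_succ]
  noncomm_ring

/-- Each row of `Ntf`, contracted with the generators, is a difference of related elements. -/
lemma relRow (i : Fin 3) :
    ∃ a b : FA, sdRel a b ∧ ∑ j : Fin 4, Ntf i j * ι ℂ j = a - b := by
  fin_cases i
  · exact ⟨_, _, Or.inl ⟨rfl, rfl⟩, row0⟩
  · exact ⟨_, _, Or.inr (Or.inl ⟨rfl, rfl⟩), row1⟩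
  · exact ⟨_, _, Or.inr (Or.inr ⟨rfl, rfl⟩), row2⟩

/-- The rows of `Nmat` annihilate the column vector of generators. -/
lemma rowRel (i : Fin 3) : ∑ j : Fin 4, Nmat i j * nb j = 0 := by
  obtain ⟨a, b, hrel, hsum⟩ := relRow i
  have h : piSD (∑ j : Fin 4, Ntf i j * ι ℂ j) = 0 := by
    rw [hsum, map_sub, piSD_rel hrel, sub_self]
  rw [map_sum] at h
  simpa only [map_mul, pi_Ntf, pi_iota] using h

/-- A vector of free-algebra elements is *good* if its image in `SD`
lies in the row span of `Nmat`. -/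
def GoodV (V : Fin 4 → FA) : Prop :=
  ∃ y : Fin 3 → SD, ∀ j, piSD (V j) = ∑ i : Fin 3, y i * Nmat i j

/-- The set of elements of the free algebra of the form `∑ V_j ∇_j` with `V` good. -/
def KK : Set FA := {a | ∃ V : Fin 4 → FA, a = ∑ j : Fin 4, V j * ι ℂ j ∧ GoodV V}

lemma zero_mem_KK : (0 : FA) ∈ KK :=
  ⟨0, by simp, 0, by simp⟩

lemma add_mem_KK {a b : FA} (ha : a ∈ KK) (hb : b ∈ KK) : a + b ∈ KK := by
  obtain ⟨V, rfl, y, hy⟩ := ha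
  obtain ⟨W, rfl, z, hz⟩ := hb
  refine ⟨V + W, by simp [add_mul, Finset.sum_add_distrib], y + z, fun j => ?_⟩
  simp [hy j, hz j, add_mul, Finset.sum_add_distrib]

lemma neg_mem_KK {a : FA} (ha : a ∈ KK) : -a ∈ KK := by
  obtain ⟨V, rfl, y, hy⟩ := ha
  refine ⟨-V, by simp [neg_mul], -y, fun j => ?_⟩
  simp [hy j, neg_mul]
  exact (Finset.sum_neg_distrib _).symm

lemma mul_left_mem_KK (c : FA) {a : FA} (ha : a ∈ KK) : c * a ∈ KK := by
  obtain ⟨V, rfl, y, hy⟩ := ha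
  refine ⟨fun j => c * V j, by rw [Finset.mul_sum]; simp [mul_assoc],
    fun i => piSD c * y i, fun j => ?_⟩
  rw [map_mul, hy j]
  exact (Finset.mul_sum _ _ _).trans (Finset.sum_congr rfl fun i _ => (mul_assoc _ _ _).symm)

lemma pi_mem_KK {a : FA} (h : a ∈ KK) : piSD a = 0 := by
  obtain ⟨V, rfl, y, hy⟩ := h
  rw [map_sum]
  calc ∑ j : Fin 4, piSD (V j * ι ℂ j)
      = ∑ j : Fin 4, (∑ i : Fin 3, y i * Nmat i j) * nb j := by
        refine Finset.sum_congr rfl fun j _ => ?_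
        rw [map_mul, hy j, pi_iota]
    _ = ∑ i : Fin 3, y i * ∑ j : Fin 4, Nmat i j * nb j := by
        refine (Finset.sum_congr rfl fun j _ => (Finset.sum_mul _ _ _).trans
          (Finset.sum_congr rfl fun i _ => mul_assoc _ _ _)).trans (Eq.trans ?_
          (Finset.sum_congr rfl fun i _ => (Finset.mul_sum _ _ _).symm))
        exact Finset.sum_comm
    _ = 0 := by simp [rowRel]

/-- Every element of the free algebra is a constant plus right multiples of generators. -/
lemma decompFA (c : FA) : ∃ (c0 : ℂ) (cc : Fin 4 → FA),
    c = algebraMap ℂ FA c0 + ∑ k : Fin 4, cc k * ι ℂ k := by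
  induction c using FreeAlgebra.induction with
  | grade0 r => exact ⟨r, 0, by simp⟩
  | grade1 x =>
      refine ⟨0, fun k => if k = x then 1 else 0, ?_⟩
      simp [ite_mul, Finset.sum_ite_eq']
  | add a b ha hb =>
      obtain ⟨a0, aa, ha⟩ := ha
      obtain ⟨b0, bb, hb⟩ := hb
      refine ⟨a0 + b0, aa + bb, ?_⟩
      rw [ha, hb, map_add]
      simp only [Pi.add_apply, add_mul, Finset.sum_add_distrib]
      abel
  | mul a b ha hb =>
      obtain ⟨a0, aa, ha⟩ := ha
      obtain ⟨b0, bb, hb⟩ := hb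
      refine ⟨a0 * b0, fun k => algebraMap ℂ FA b0 * aa k + a * bb k, ?_⟩
      have h1 : algebraMap ℂ FA b0 * a
          = algebraMap ℂ FA (a0 * b0) + ∑ k : Fin 4, (algebraMap ℂ FA b0 * aa k) * ι ℂ k := by
        rw [ha, mul_add, Finset.mul_sum, ← map_mul, mul_comm b0 a0]
        simp [mul_assoc]
      calc a * b = algebraMap ℂ FA b0 * a + ∑ k : Fin 4, (a * bb k) * ι ℂ k := by
            rw [hb, mul_add, Finset.mul_sum, ← Algebra.commutes b0 a]
            simp [mul_assoc]
        _ = algebraMap ℂ FA (a0 * b0)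
            + ∑ k : Fin 4, (algebraMap ℂ FA b0 * aa k + a * bb k) * ι ℂ k := by
            rw [h1, add_assoc, ← Finset.sum_add_distrib]
            simp [add_mul]

lemma mul_right_mem_KK {a : FA} (ha : a ∈ KK) (c : FA) : a * c ∈ KK := by
  obtain ⟨c0, cc, hc⟩ := decompFA c
  have hpa : piSD a = 0 := pi_mem_KK ha
  obtain ⟨V, haV, y, hy⟩ := ha
  refine ⟨fun j => algebraMap ℂ FA c0 * V j + a * cc j, ?_,
    fun i => algebraMap ℂ SD c0 * y i, fun j => ?_⟩
  · have h1 : algebraMap ℂ FA c0 * a = ∑ j : Fin 4, (algebraMap ℂ FA c0 * V j) * ι ℂ j := by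
      rw [haV, Finset.mul_sum]; simp [mul_assoc]
    calc a * c = algebraMap ℂ FA c0 * a + ∑ k : Fin 4, (a * cc k) * ι ℂ k := by
          rw [hc, mul_add, Finset.mul_sum, ← Algebra.commutes c0 a]
          simp [mul_assoc]
      _ = ∑ j : Fin 4, (algebraMap ℂ FA c0 * V j + a * cc j) * ι ℂ j := by
          rw [h1, ← Finset.sum_add_distrib]
          simp [add_mul]
  · rw [map_add, map_mul, map_mul, hy j, hpa, zero_mul, add_zero, AlgHom.commutes]
    exact (Finset.mul_sum _ _ _).trans (Finset.sum_congr rfl fun i _ => (mul_assoc _ _ _).symm)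

lemma rowsum_mem_KK (i : Fin 3) : (∑ j : Fin 4, Ntf i j * ι ℂ j) ∈ KK := by
  refine ⟨fun j => Ntf i j, rfl, fun i' => if i' = i then 1 else 0, fun j => ?_⟩
  simp [pi_Ntf, ite_mul, Finset.sum_ite_eq']

lemma rel_mem_KK {a b : FA} (h : sdRel a b) : a - b ∈ KK := by
  rcases h with ⟨ha, hb⟩ | ⟨ha, hb⟩ | ⟨ha, hb⟩
  · subst ha hb; rw [← row0]; exact rowsum_mem_KK 0
  · subst ha hb; rw [← row1]; exact rowsum_mem_KK 1
  · subst ha hb; rw [← row2]; exact rowsum_mem_KK 2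

lemma rel_sub_mem_KK {a b : FA} (h : RingQuot.Rel sdRel a b) : a - b ∈ KK := by
  induction h with
  | of h => exact rel_mem_KK h
  | add_left _ ih => rwa [add_sub_add_right_eq_sub]
  | mul_left _ ih => rw [← sub_mul]; exact mul_right_mem_KK ih _
  | mul_right _ ih => rw [← mul_sub]; exact mul_left_mem_KK _ ih

lemma eqvGen_sub_mem_KK {a b : FA} (h : Relation.EqvGen (RingQuot.Rel sdRel) a b) :
    a - b ∈ KK := by
  induction h with
  | rel _ _ h => exact rel_sub_mem_KK h
  | refl a => rw [sub_self]; exact zero_mem_KK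
  | symm a b _ ih => rw [← neg_sub]; exact neg_mem_KK ih
  | trans a b c _ _ ih1 ih2 => rw [← sub_add_sub_cancel a b c]; exact add_mem_KK ih1 ih2

lemma eqvGen_of_pi_eq {a b : FA} (h : piSD a = piSD b) :
    Relation.EqvGen (RingQuot.Rel sdRel) a b := by
  have h1 : RingQuot.mkRingHom sdRel a = RingQuot.mkRingHom sdRel b := by
    rw [← RingQuot.mkAlgHom_coe ℂ sdRel]
    exact h
  rw [RingQuot.mkRingHom_def] at h1
  simp only [RingHom.coe_mk, MonoidHom.coe_mk, OneHom.coe_mk] at h1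
  exact Quot.eqvGen_exact (congrArg RingQuot.toQuot h1)

/-- Injectivity of contraction with the generators in the free algebra. -/
lemma free_inj (z : Fin 4 → FA) (hz : ∑ l : Fin 4, z l * ι ℂ l = 0) (l : Fin 4) :
    z l = 0 := by
  set Φ : FreeAlgebra ℂ (Fin 4) ≃ₐ[ℂ] MA := FreeAlgebra.equivMonoidAlgebraFreeMonoid with hΦ
  have hΦι : ∀ m : Fin 4, Φ (ι ℂ m) = MonoidAlgebra.single (FreeMonoid.of m) (1 : ℂ) := by
    intro m
    simp [hΦ, FreeAlgebra.equivMonoidAlgebraFreeMonoid, MonoidAlgebra.of_apply]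
  have h0 : ∑ m : Fin 4, Φ (z m) * MonoidAlgebra.single (FreeMonoid.of m) (1 : ℂ) = 0 := by
    have := congrArg Φ hz
    rw [map_sum, map_zero] at this
    simpa only [map_mul, hΦι] using this
  have hcoef : ∀ w : FreeMonoid (Fin 4), (Φ (z l)).coeff w = 0 := by
    intro w
    have happ := congrArg (fun f : MA => f.coeff (w * FreeMonoid.of l)) h0
    simp only [MonoidAlgebra.coeff_zero, Finsupp.coe_zero, Pi.zero_apply] at happ
    rw [MonoidAlgebra.coeff_sum, Finsupp.finset_sum_apply] at happ
    rw [Finset.sum_eq_single l (fun m _ hml => ?_) (fun h => absurd (Finset.mem_univ l) h)]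
      at happ
    · rw [MonoidAlgebra.coeff_mul_single_eq_coeff_mul w (fun a _ => mul_left_inj _)] at happ
      simpa using happ
    · refine MonoidAlgebra.mul_single_apply_of_not_exists_mul _ _ ?_
      rintro ⟨d, hd⟩
      have := congrArg FreeMonoid.toList hd
      simp only [FreeMonoid.toList_mul, FreeMonoid.toList_of] at this
      have := List.append_inj_right' this (by simp)
      simp at this
      exact hml this.symm
  have : Φ (z l) = 0 := MonoidAlgebra.ext (Finsupp.ext hcoef)
  have := congrArg Φ.symm this
  simpa using this

/-- exactness of the Koszul resolution of `A⁽⁺⁾` at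
`(A⁽⁺⁾)⁴`: if a row vector `x = (x_0,x_1,x_2,x_3)` satisfies
`Σ_λ x_λ ∇_λ = 0`, then `x = yN` for some row vector `y ∈ (A⁽⁺⁾)³`. -/
theorem sd_koszul_exact_middle :
    ∀ x : Fin 4 → SD, (∑ l : Fin 4, x l * nb l = 0) →
      ∃ y : Fin 3 → SD, ∀ j : Fin 4, x j = ∑ i : Fin 3, y i * Nmat i j := by
  intro x hx
  choose X hX using fun l => RingQuot.mkAlgHom_surjective ℂ sdRel (x l)
  have hXpi : ∀ l, piSD (X l) = x l := hX
  have hpi : piSD (∑ l : Fin 4, X l * ι ℂ l) = piSD 0 := by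
    rw [map_zero, map_sum]
    calc ∑ l : Fin 4, piSD (X l * ι ℂ l) = ∑ l : Fin 4, x l * nb l := by
          refine Finset.sum_congr rfl fun l _ => ?_
          rw [map_mul, hXpi l, pi_iota]
      _ = 0 := hx
  have hmem : (∑ l : Fin 4, X l * ι ℂ l) - 0 ∈ KK :=
    eqvGen_sub_mem_KK (eqvGen_of_pi_eq hpi)
  rw [sub_zero] at hmem
  obtain ⟨V, hV, y, hy⟩ := hmem
  have hXV : ∀ l, X l = V l := by
    intro l
    have h0 : ∑ m : Fin 4, (X m - V m) * ι ℂ m = 0 := by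
      simp only [sub_mul, Finset.sum_sub_distrib, ← hV, sub_self]
    have := free_inj _ h0 l
    exact sub_eq_zero.mp this
  exact ⟨y, fun j => by rw [← hXpi j, hXV j, hy j]⟩

end
end
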